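/- Let b ∈ ℝ with 0 < |b| < 1. Define τ : ℝ² → ℝ by τ(0,0) = 0 and, for (x, ξ) ≠ (0,0), τ(x, ξ) = −2√(x² + ξ²) · sin( (1/3) · arcsin( b x³ / (x² + ξ²)^{3/2} ) ). Then τ(0, ξ) = 0 for all ξ ∈ ℝ, and for every (x, ξ) ≠ (0,0) one has τ(x,ξ)³ − 3(x² + ξ²)·τ(x,ξ) − 2bx³ = 0; i.e., τ is the root of the cubic p(·, x, ξ) = τ³ − 3(x²+ξ²)τ − 2bx³ that vanishes identically on the line x = 0. -/

import Mathlib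

/-!
Writing `r = √(x² + ξ²)` and `s = b x³ / r³ ∈ [-1, 1]`, the triple-angle identity
`sin (3θ) = 3 sin θ - 4 sin³ θ` at `θ = arcsin s / 3` says exactly that `τ = -2 r sin θ`
solves `τ³ - 3 r² τ = 2 s r³ = 2 b x³`.
-/

open Real

/-- The root of the cubic `τ³ − 3(x²+ξ²)τ − 2bx³` that vanishes identically on the line
`x = 0`, given by the explicit trigonometric formula of Section 4. -/
noncomputable def tauRoot (b : ℝ) (p : ℝ × ℝ) : ℝ :=
  if p = (0, 0) then 0
  else
    -2 * Real.sqrt (p.1 ^ 2 + p.2 ^ 2) *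
      Real.sin ((1 / 3) * Real.arcsin (b * p.1 ^ 3 / (p.1 ^ 2 + p.2 ^ 2) ^ ((3:ℝ) / 2)))

theorem depressed_cubic_trig_root {r c : ℝ} (hr : 0 < r) (hc : |c| ≤ r ^ 3) :
    (-2 * r * sin (1 / 3 * arcsin (c / r ^ 3))) ^ 3
      - 3 * r ^ 2 * (-2 * r * sin (1 / 3 * arcsin (c / r ^ 3))) - 2 * c = 0 := by
  have hr3 : 0 < r ^ 3 := pow_pos hr 3
  have hs : |c / r ^ 3| ≤ 1 := by
    rw [abs_div, abs_of_pos hr3]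
    exact div_le_one_of_le₀ hc hr3.le
  obtain ⟨hs₁, hs₂⟩ := abs_le.mp hs
  have htriple : 3 * sin (1 / 3 * arcsin (c / r ^ 3)) - 4 * sin (1 / 3 * arcsin (c / r ^ 3)) ^ 3
      = c / r ^ 3 := by
    rw [← sin_three_mul, ← mul_assoc, mul_one_div_cancel three_ne_zero, one_mul,
      sin_arcsin hs₁ hs₂]
  have hc_eq : c / r ^ 3 * r ^ 3 = c := div_mul_cancel₀ c hr3.ne'
  linear_combination 2 * r ^ 3 * htriple + 2 * hc_eq

theorem abs_mul_pow_three_le_sqrt_sq_add_sq_pow_three {b : ℝ} (hb : |b| ≤ 1) (x ξ : ℝ) :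
    |b * x ^ 3| ≤ √(x ^ 2 + ξ ^ 2) ^ 3 := by
  have hx : |x| ≤ √(x ^ 2 + ξ ^ 2) := abs_le_sqrt (by nlinarith [sq_nonneg ξ])
  calc |b * x ^ 3| = |b| * |x| ^ 3 := by rw [abs_mul, abs_pow]
    _ ≤ 1 * √(x ^ 2 + ξ ^ 2) ^ 3 := by gcongr
    _ = √(x ^ 2 + ξ ^ 2) ^ 3 := one_mul _

theorem rpow_three_halves_eq_sqrt_pow {a : ℝ} (ha : 0 ≤ a) : a ^ ((3 : ℝ) / 2) = √a ^ 3 := by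
  rw [rpow_div_two_eq_sqrt _ ha]
  exact_mod_cast rpow_natCast (√a) 3

theorem tauRoot_is_root_general (b : ℝ) (hb₁ : |b| < 1) :
    (∀ ξ : ℝ, tauRoot b (0, ξ) = 0) ∧
    ∀ p : ℝ × ℝ, p ≠ (0, 0) →
      (tauRoot b p) ^ 3 - 3 * (p.1 ^ 2 + p.2 ^ 2) * tauRoot b p - 2 * b * p.1 ^ 3 = 0 := by
  refine ⟨fun ξ => by simp [tauRoot], fun ⟨x, ξ⟩ hp => ?_⟩
  have hA : 0 < x ^ 2 + ξ ^ 2 := by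
    simp only [ne_eq, Prod.mk.injEq, not_and_or] at hp
    rcases hp with h | h <;> positivity
  have hroot := depressed_cubic_trig_root (sqrt_pos.mpr hA)
    (abs_mul_pow_three_le_sqrt_sq_add_sq_pow_three hb₁.le x ξ)
  rw [sq_sqrt hA.le] at hroot
  rw [tauRoot, if_neg hp, rpow_three_halves_eq_sqrt_pow hA.le]
  linear_combination hroot

/-- `tauRoot` vanishes on the line `x = 0` and is a root of the cubic
`τ³ − 3(x²+ξ²)τ − 2bx³` at every `(x, ξ) ≠ (0,0)`. -/
theorem tauRoot_is_root (b : ℝ) (hb₀ : 0 < |b|) (hb₁ : |b| < 1) :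
    (∀ ξ : ℝ, tauRoot b (0, ξ) = 0) ∧
    ∀ p : ℝ × ℝ, p ≠ (0, 0) →
      (tauRoot b p) ^ 3 - 3 * (p.1 ^ 2 + p.2 ^ 2) * tauRoot b p - 2 * b * p.1 ^ 3 = 0 :=
  tauRoot_is_root_general b hb₁
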